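/- Let w ∈ ℂ with 0 < |w| < 1 and set q = w². For n ≥ 0 define α_n = w^{-2n²-2n}·(a_n(w) + a_n(-w)), where for x ≠ 0, a_n(x) = x^{3n²+2n}·(1 - x^{2n+1})/(1 - x²)·Σ_{j=-n}^{n} (-1)^j x^{-j²}, and define β_n = 2(-1)^n / ((w⁴;w⁴)_n · (1 - w^{4n+2})). Then for every n ≥ 0, β_n = Σ_{j=0}^{n} α_j / ((q;q)_{n-j} · (q²;q)_{n+j}), i.e. (α_n, β_n) is a Bailey pair relative to a = q in base q (here q = w², so (q²;q)_{n+j} = (w⁴;w²)_{n+j}). -/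

import Mathlib

/-
With `q = w²`, the two halves of `aFun w j + aFun (-w) j` cancel or double according to the
parity of `j - k`, so that `α_j = 2 (-1)^j / (1 - q) · Σ_{|k| ≤ j} q^{e(|k|, j - |k|)}` with
the quadratic exponent `e = alphaExp`. After exchanging the sums over `j` and `k`, the inner sum
over `j` has the closed form `(-1)^k / ((q;q)_{n-k} (q;q)_{n+k} (1 - q^{2n+1}))`: a telescoping
certificate gives a first-order recurrence in `k`, started at `k = n`. What is left is Gauss's
identity `Σ_{i ≤ 2n} (-1)^i / ((q;q)_i (q;q)_{2n-i}) = 1 / (q²;q²)_n`, proved through the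
recurrence `(1 - q^{m+2}) G(m+2) = G(m)` for the alternating sums `G(m)`.
-/

/-- Finite q-Pochhammer symbol `(x;q)_n = ∏_{i=0}^{n-1} (1 - x q^i)`. -/
noncomputable def qPoch (x q : ℂ) (n : ℕ) : ℂ :=
  ∏ i ∈ Finset.range n, (1 - x * q ^ i)

/-- `a_n(x) = x^{3n²+2n} (1 - x^{2n+1})/(1 - x²) · Σ_{j=-n}^{n} (-1)^j x^{-j²}`. -/
noncomputable def aFun (x : ℂ) (n : ℕ) : ℂ :=
  x ^ (3 * n ^ 2 + 2 * n) * (1 - x ^ (2 * n + 1)) / (1 - x ^ 2) *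
    ∑ j ∈ Finset.Icc (-(n : ℤ)) (n : ℤ), (-1 : ℂ) ^ j * x ^ (-(j ^ 2))

open Finset

lemma qPoch_succ (x q : ℂ) (m : ℕ) : qPoch x q (m + 1) = qPoch x q m * (1 - x * q ^ m) :=
  prod_range_succ _ m

lemma qPoch_succ' (x q : ℂ) (m : ℕ) : qPoch x q (m + 1) = (1 - x) * qPoch (x * q) q m := by
  simp only [qPoch, prod_range_succ', pow_succ, pow_zero, mul_one, mul_assoc, mul_comm q]
  ring

lemma qPoch_self_succ (q : ℂ) (m : ℕ) :
    qPoch q q (m + 1) = qPoch q q m * (1 - q ^ (m + 1)) := by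
  rw [qPoch_succ, ← pow_succ']

lemma one_sub_mul_qPoch_sq (q : ℂ) (m : ℕ) :
    (1 - q) * qPoch (q ^ 2) q m = qPoch q q (m + 1) := by
  rw [qPoch_succ', sq]

section NotOfFinOrder

variable {q : ℂ} (hq : ¬IsOfFinOrder q)
include hq

lemma one_sub_pow_ne_zero {m : ℕ} (hm : m ≠ 0) : 1 - q ^ m ≠ 0 :=
  sub_ne_zero.2 fun h => hq <| isOfFinOrder_iff_pow_eq_one.2 ⟨m, Nat.pos_of_ne_zero hm, h.symm⟩

lemma qPoch_self_ne_zero (m : ℕ) : qPoch q q m ≠ 0 :=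
  prod_ne_zero_iff.2 fun i _ => by
    rw [← pow_succ']; exact one_sub_pow_ne_zero hq i.succ_ne_zero

end NotOfFinOrder

noncomputable def altQSum (q z : ℂ) (m : ℕ) : ℂ :=
  ∑ i ∈ range (m + 1), (-1) ^ i * z ^ i / (qPoch q q i * qPoch q q (m - i))

section Gauss

variable {q : ℂ} (hq : ¬IsOfFinOrder q)
include hq

lemma sum_one_sub_pow_div_eq_neg_altQSum (m : ℕ) :
    ∑ i ∈ range (m + 2), (-1) ^ i * (1 - q ^ i) / (qPoch q q i * qPoch q q (m + 1 - i)) =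
      -altQSum q 1 m := by
  rw [sum_range_succ', altQSum, ← sum_neg_distrib]
  simp only [pow_zero, sub_self, mul_zero, zero_div, add_zero, one_pow, mul_one]
  refine sum_congr rfl fun i _ => ?_
  have := qPoch_self_ne_zero hq i
  have := qPoch_self_ne_zero hq (m - i)
  have := one_sub_pow_ne_zero hq i.succ_ne_zero
  rw [Nat.add_sub_add_right, qPoch_self_succ]
  field_simp
  ring

lemma altQSum_one_sub_altQSum_self (m : ℕ) :
    altQSum q 1 (m + 1) - altQSum q q (m + 1) = -altQSum q 1 m := by
  rw [← sum_one_sub_pow_div_eq_neg_altQSum hq, altQSum, altQSum, ← sum_sub_distrib]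
  refine sum_congr rfl fun i _ => ?_
  ring

lemma one_sub_pow_mul_altQSum_eq_sub (m : ℕ) :
    (1 - q ^ (m + 2)) * altQSum q 1 (m + 2) = altQSum q q (m + 1) - altQSum q 1 (m + 1) := by
  have hsplit : ∀ i ∈ range (m + 3),
      (1 - q ^ (m + 2)) * ((-1) ^ i * 1 ^ i / (qPoch q q i * qPoch q q (m + 2 - i))) =
        (-1) ^ i * q ^ i * (1 - q ^ (m + 2 - i)) / (qPoch q q i * qPoch q q (m + 2 - i)) +
          (-1) ^ i * (1 - q ^ i) / (qPoch q q i * qPoch q q (m + 2 - i)) := by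
    intro i hi
    have : q ^ i * q ^ (m + 2 - i) = q ^ (m + 2) := by
      rw [← pow_add, Nat.add_sub_cancel' (by simpa [Nat.lt_succ_iff] using hi)]
    rw [← this]
    ring
  rw [altQSum, mul_sum, sum_congr rfl hsplit, sum_add_distrib,
    sum_one_sub_pow_div_eq_neg_altQSum hq, sum_range_succ, Nat.sub_self, pow_zero, sub_self,
    mul_zero, zero_div, add_zero, sub_eq_add_neg, altQSum]
  congr 1
  refine sum_congr rfl fun i hi => ?_
  rw [mem_range] at hi
  have := qPoch_self_ne_zero hq i
  have := qPoch_self_ne_zero hq (m + 1 - i)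
  have := one_sub_pow_ne_zero hq (m + 1 - i).succ_ne_zero
  rw [show m + 2 - i = m + 1 - i + 1 by omega, qPoch_self_succ]
  field_simp

lemma one_sub_pow_mul_altQSum_add_two (m : ℕ) :
    (1 - q ^ (m + 2)) * altQSum q 1 (m + 2) = altQSum q 1 m := by
  rw [one_sub_pow_mul_altQSum_eq_sub hq]
  linear_combination -altQSum_one_sub_altQSum_self hq m

lemma qPoch_sq_mul_altQSum (n : ℕ) : qPoch (q ^ 2) (q ^ 2) n * altQSum q 1 (2 * n) = 1 := by
  induction n with
  | zero => simp [qPoch, altQSum]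
  | succ n ih =>
    rw [qPoch_succ, mul_assoc, ← pow_succ', ← pow_mul, show 2 * (n + 1) = 2 * n + 2 by ring,
      one_sub_pow_mul_altQSum_add_two hq, ih]

end Gauss

-- `alphaExp k d = ((k + d')² - k²) / 2`, where `d'` is `d` rounded up to an even number.
def alphaExp (k d : ℕ) : ℕ := 2 * ((d + 1) / 2) * (k + (d + 1) / 2)

def telescopeExp (k d : ℕ) : ℕ := 2 * ((d + 1) / 2) * (k + 1 + d / 2)

lemma alphaExp_two_mul (k t : ℕ) : alphaExp k (2 * t) = 2 * t * (k + t) := by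
  simp only [alphaExp, show (2 * t + 1) / 2 = t by omega]

lemma alphaExp_two_mul_add_one (k t : ℕ) :
    alphaExp k (2 * t + 1) = 2 * (t + 1) * (k + t + 1) := by
  rw [alphaExp, show (2 * t + 1 + 1) / 2 = t + 1 by omega, add_assoc]

lemma telescopeExp_two_mul (k t : ℕ) : telescopeExp k (2 * t) = 2 * t * (k + 1 + t) := by
  simp only [telescopeExp, show (2 * t + 1) / 2 = t by omega, show 2 * t / 2 = t by omega]

lemma telescopeExp_two_mul_add_one (k t : ℕ) :
    telescopeExp k (2 * t + 1) = 2 * (t + 1) * (k + 1 + t) := by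
  simp only [telescopeExp, show (2 * t + 1 + 1) / 2 = t + 1 by omega,
    show (2 * t + 1) / 2 = t by omega]

noncomputable def innerSum (q : ℂ) (n k m : ℕ) : ℂ :=
  ∑ j ∈ Icc k m, (-1) ^ j * q ^ alphaExp k (j - k) / (qPoch q q (n - j) * qPoch q q (n + j + 1))

section InnerSum

variable {q : ℂ} (hq : ¬IsOfFinOrder q)
include hq

lemma innerSum_telescope_step (k d s : ℕ) :
    (-1) ^ (k + d) * q ^ telescopeExp k d * (1 - q ^ (s + 1)) /
        (qPoch q q (s + 1) * qPoch q q (2 * k + 2 * d + s + 2)) +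
      (-1) ^ (k + d + 1) * ((1 - q ^ (d + s + 1)) * q ^ alphaExp k (d + 1) +
          (1 - q ^ (2 * k + d + s + 2)) * q ^ alphaExp (k + 1) d) /
        (qPoch q q s * qPoch q q (2 * k + 2 * d + s + 3)) =
      (-1) ^ (k + d + 1) * q ^ telescopeExp k (d + 1) * (1 - q ^ s) /
        (qPoch q q s * qPoch q q (2 * k + 2 * d + s + 3)) := by
  have := qPoch_self_ne_zero hq s
  have := qPoch_self_ne_zero hq (2 * k + 2 * d + s + 2)
  have := one_sub_pow_ne_zero hq (m := s + 1) (by omega)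
  have := one_sub_pow_ne_zero hq (m := 2 * k + 2 * d + s + 2 + 1) (by omega)
  rw [qPoch_self_succ q s, qPoch_self_succ q (2 * k + 2 * d + s + 2)]
  rcases Nat.even_or_odd' d with ⟨t, rfl | rfl⟩
  · rw [alphaExp_two_mul_add_one, alphaExp_two_mul, telescopeExp_two_mul,
      telescopeExp_two_mul_add_one]
    field_simp
    ring
  · rw [show 2 * t + 1 + 1 = 2 * (t + 1) by ring, alphaExp_two_mul, alphaExp_two_mul_add_one,
      telescopeExp_two_mul, telescopeExp_two_mul_add_one]
    field_simp
    ring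

lemma innerSum_telescope {k n m : ℕ} (hkm : k ≤ m) (hmn : m ≤ n) :
    (1 - q ^ (n - k)) * innerSum q n k m + (1 - q ^ (n + k + 1)) * innerSum q n (k + 1) m =
      (-1) ^ m * q ^ telescopeExp k (m - k) * (1 - q ^ (n - m)) /
        (qPoch q q (n - m) * qPoch q q (n + m + 1)) := by
  induction m, hkm using Nat.le_induction with
  | base =>
    rw [innerSum, innerSum, Icc_self, sum_singleton, Icc_eq_empty (by omega), sum_empty,
      Nat.sub_self, alphaExp, telescopeExp]
    ring
  | succ m hkm ih =>
    obtain ⟨d, rfl⟩ := Nat.exists_eq_add_of_le hkm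
    obtain ⟨s, rfl⟩ := Nat.exists_eq_add_of_le hmn
    rw [innerSum, innerSum, sum_Icc_succ_top (by omega), sum_Icc_succ_top (by omega),
      ← innerSum, ← innerSum]
    have ih := ih (by omega)
    simp only [show k + d + 1 + s - (k + d) = s + 1 by omega,
      show k + d + 1 + s - (k + d + 1) = s by omega, show k + d + 1 + s - k = d + s + 1 by omega,
      show k + d + 1 - k = d + 1 by omega, show k + d + 1 - (k + 1) = d by omega,
      show k + d - k = d by omega, show k + d + 1 + s + k + 1 = 2 * k + d + s + 2 by omega,
      show k + d + 1 + s + (k + d + 1) + 1 = 2 * k + 2 * d + s + 3 by omega] at ih ⊢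
    rw [show k + d + 1 + s + (k + d) + 1 = 2 * k + 2 * d + s + 2 by omega] at ih
    rw [← innerSum_telescope_step hq k d s, ← ih]
    ring

lemma innerSum_recurrence {k n : ℕ} (hkn : k < n) :
    (1 - q ^ (n - k)) * innerSum q n k n = -((1 - q ^ (n + k + 1)) * innerSum q n (k + 1) n) := by
  have h := innerSum_telescope hq hkn.le le_rfl
  rw [Nat.sub_self, pow_zero, sub_self, mul_zero, zero_div] at h
  exact eq_neg_of_add_eq_zero_left h

lemma innerSum_eq {k n : ℕ} (hkn : k ≤ n) :
    innerSum q n k n =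
      (-1) ^ k / (qPoch q q (n - k) * qPoch q q (n + k) * (1 - q ^ (2 * n + 1))) := by
  induction hkn using Nat.decreasingInduction with
  | self =>
    rw [innerSum, Icc_self, sum_singleton, Nat.sub_self, alphaExp,
      show n + n + 1 = 2 * n + 1 by ring, qPoch_self_succ, ← two_mul]
    simp [qPoch]
  | of_succ k hkn ih =>
    obtain ⟨s, rfl⟩ := Nat.exists_eq_add_of_lt hkn
    have hs := one_sub_pow_ne_zero hq (m := s + 1) s.succ_ne_zero
    have := one_sub_pow_ne_zero hq (m := k + s + 1 + k + 1) (by omega)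
    have := one_sub_pow_ne_zero hq (m := 2 * (k + s + 1) + 1) (by omega)
    have := qPoch_self_ne_zero hq s
    have := qPoch_self_ne_zero hq (k + s + 1 + k)
    have hrec := innerSum_recurrence hq hkn
    rw [ih, show k + s + 1 - k = s + 1 by omega, show k + s + 1 - (k + 1) = s by omega] at hrec
    apply mul_left_cancel₀ hs
    rw [hrec, show k + s + 1 - k = s + 1 by omega, qPoch_self_succ q s,
      show k + s + 1 + (k + 1) = k + s + 1 + k + 1 by ring, qPoch_self_succ q (k + s + 1 + k)]
    field_simp
    ring

end InnerSum

lemma neg_one_pow_mul_neg_one_pow_add (a r : ℕ) : (-1 : ℂ) ^ r * (-1) ^ (r + a) = (-1) ^ a := by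
  rw [pow_add, ← mul_assoc, ← mul_pow, neg_one_mul, neg_neg, one_pow, one_mul]

lemma sum_Icc_neg_one_pow_div_qPoch (q : ℂ) (n : ℕ) :
    ∑ k ∈ Icc (-(n : ℤ)) n,
        (-1) ^ k.natAbs / (qPoch q q (n - k.natAbs) * qPoch q q (n + k.natAbs)) =
      (-1) ^ n * altQSum q 1 (2 * n) := by
  rw [altQSum, mul_sum]
  refine sum_nbij' (fun k => (k + n).toNat) (fun i => (i : ℤ) - n) ?_ ?_ ?_ ?_ ?_
  all_goals intro k hk; simp only [mem_Icc, mem_range] at hk ⊢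
  any_goals omega
  rw [one_pow, mul_one]
  obtain ⟨a, rfl | rfl⟩ : ∃ a : ℕ, k = a ∨ k = -a := ⟨k.natAbs, Int.natAbs_eq k⟩
  · rw [Int.natAbs_natCast, show ((a : ℤ) + n).toNat = n + a by omega,
      show 2 * n - (n + a) = n - a by omega, ← mul_div_assoc, neg_one_pow_mul_neg_one_pow_add,
      mul_comm (qPoch q q (n + a))]
  · obtain ⟨r, rfl⟩ : ∃ r, n = r + a := ⟨n - a, by omega⟩
    rw [Int.natAbs_neg, Int.natAbs_natCast, show (-(a : ℤ) + (r + a : ℕ)).toNat = r by omega,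
      show 2 * (r + a) - r = r + a + a by omega, Nat.add_sub_cancel, ← mul_div_assoc,
      mul_comm ((-1 : ℂ) ^ (r + a)), neg_one_pow_mul_neg_one_pow_add]

lemma sum_alphaExp_div_qPoch {q : ℂ} (hq : ¬IsOfFinOrder q) (n : ℕ) :
    ∑ j ∈ range (n + 1), ∑ k ∈ Icc (-(j : ℤ)) j,
        (-1) ^ j * q ^ alphaExp k.natAbs (j - k.natAbs) /
          (qPoch q q (n - j) * qPoch q q (n + j + 1)) =
      (-1) ^ n / (qPoch (q ^ 2) (q ^ 2) n * (1 - q ^ (2 * n + 1))) := by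
  rw [sum_comm' (t' := Icc (-(n : ℤ)) n) (s' := fun k => Icc k.natAbs n)
    (by intro j k; simp only [mem_range, mem_Icc]; omega)]
  have hinner : ∀ k ∈ Icc (-(n : ℤ)) n, ∑ j ∈ Icc k.natAbs n,
      (-1) ^ j * q ^ alphaExp k.natAbs (j - k.natAbs) /
        (qPoch q q (n - j) * qPoch q q (n + j + 1)) =
      (-1) ^ k.natAbs / (qPoch q q (n - k.natAbs) * qPoch q q (n + k.natAbs)) /
        (1 - q ^ (2 * n + 1)) := by
    intro k hk
    rw [mem_Icc] at hk
    rw [← innerSum, innerSum_eq hq (by omega), div_div]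
  rw [sum_congr rfl hinner, ← sum_div, sum_Icc_neg_one_pow_div_qPoch,
    eq_one_div_of_mul_eq_one_right (qPoch_sq_mul_altQSum hq n), mul_one_div, div_div]

section Alpha

lemma neg_one_zpow_natAbs (k : ℤ) : (-1 : ℂ) ^ k = (-1) ^ k.natAbs := by
  obtain ⟨a, rfl | rfl⟩ : ∃ a : ℕ, k = a ∨ k = -a := ⟨_, Int.natAbs_eq k⟩
  all_goals simp [← inv_pow]

lemma neg_one_zpow_mul_neg_zpow_neg_sq (w : ℂ) (k : ℤ) :
    (-1 : ℂ) ^ k * (-w) ^ (-k ^ 2) = w ^ (-k ^ 2) := by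
  rw [neg_eq_neg_one_mul w, mul_zpow, ← mul_assoc, ← zpow_add₀ (by norm_num),
    Even.neg_one_zpow, one_mul]
  rw [show k + -k ^ 2 = -((k - 1) * (k - 1 + 1)) by ring]
  exact (Int.even_mul_succ_self (k - 1)).neg

lemma neg_one_pow_three_mul_sq_add (j : ℕ) : (-1 : ℂ) ^ (3 * j ^ 2 + 2 * j) = (-1) ^ j := by
  rw [show 3 * j ^ 2 + 2 * j = j + (j * (j + 1) + 2 * j ^ 2) by ring, pow_add, pow_add,
    (Nat.even_mul_succ_self j).neg_one_pow, (even_two_mul _).neg_one_pow, mul_one, mul_one]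

lemma aFun_neg (w : ℂ) (j : ℕ) :
    aFun (-w) j = (-1) ^ j * w ^ (3 * j ^ 2 + 2 * j) * (1 + w ^ (2 * j + 1)) / (1 - w ^ 2) *
      ∑ k ∈ Icc (-(j : ℤ)) j, w ^ (-k ^ 2) := by
  rw [aFun, neg_pow w, neg_one_pow_three_mul_sq_add, Odd.neg_pow ⟨j, rfl⟩, neg_sq,
    sum_congr rfl fun k _ => neg_one_zpow_mul_neg_zpow_neg_sq w k, sub_neg_eq_add]

variable {w : ℂ} (hw : w ≠ 0)
include hw

lemma alpha_summand_eq {j : ℕ} {k : ℤ} (hk : k.natAbs ≤ j) :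
    w ^ (-(2 * (j : ℤ) ^ 2 + 2 * j)) * w ^ (3 * j ^ 2 + 2 * j) *
        ((-1) ^ k * (1 - w ^ (2 * j + 1)) + (-1) ^ j * (1 + w ^ (2 * j + 1))) * w ^ (-k ^ 2) =
      2 * (-1) ^ j * (w ^ 2) ^ alphaExp k.natAbs (j - k.natAbs) := by
  rw [neg_one_zpow_natAbs, ← Int.natAbs_sq k,
    show 2 * (j : ℤ) ^ 2 + 2 * j = ((2 * j ^ 2 + 2 * j : ℕ) : ℤ) by push_cast; ring,
    show (k.natAbs : ℤ) ^ 2 = ((k.natAbs ^ 2 : ℕ) : ℤ) by push_cast; ring, zpow_neg, zpow_neg,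
    zpow_natCast, zpow_natCast]
  obtain ⟨d, rfl⟩ := Nat.exists_eq_add_of_le hk
  generalize k.natAbs = a
  rw [Nat.add_sub_cancel_left]
  rcases Nat.even_or_odd' d with ⟨t, rfl | rfl⟩
  · rw [alphaExp_two_mul, pow_add (-1 : ℂ) a, (even_two_mul t).neg_one_pow, mul_one]
    field_simp
    ring
  · rw [alphaExp_two_mul_add_one, pow_add (-1 : ℂ) a, (odd_two_mul_add_one t).neg_one_pow]
    field_simp
    ring

lemma alpha_eq_sum_alphaExp (j : ℕ) :
    w ^ (-(2 * (j : ℤ) ^ 2 + 2 * j)) * (aFun w j + aFun (-w) j) =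
      2 * (-1) ^ j / (1 - w ^ 2) *
        ∑ k ∈ Icc (-(j : ℤ)) j, (w ^ 2) ^ alphaExp k.natAbs (j - k.natAbs) := by
  rw [aFun, aFun_neg, mul_sum, mul_sum, ← sum_add_distrib, mul_sum, mul_sum]
  refine sum_congr rfl fun k hk => ?_
  rw [mem_Icc] at hk
  linear_combination alpha_summand_eq hw (j := j) (k := k) (by omega) / (1 - w ^ 2)

end Alpha

/-- Theorem 2.1: `(α_n, β_n)` with `α_n = w^{-2n²-2n}(a_n(w)+a_n(-w))` and
`β_n = 2(-1)^n/((w⁴;w⁴)_n (1-w^{4n+2}))` form a Bailey pair relative to `a = q`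
in base `q`, where `q = w²`. -/
theorem mock_bailey_pair (w : ℂ) (h0 : 0 < ‖w‖) (h1 : ‖w‖ < 1) :
    ∀ n : ℕ,
      2 * (-1 : ℂ) ^ n / (qPoch (w ^ 4) (w ^ 4) n * (1 - w ^ (4 * n + 2))) =
        ∑ j ∈ Finset.range (n + 1),
          (w ^ (-(2 * (j : ℤ) ^ 2 + 2 * (j : ℤ))) * (aFun w j + aFun (-w) j)) /
            (qPoch (w ^ 2) (w ^ 2) (n - j) * qPoch ((w ^ 2) ^ 2) (w ^ 2) (n + j)) := by
  have hw : w ≠ 0 := norm_pos_iff.1 h0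
  have hq : ¬IsOfFinOrder (w ^ 2) := fun h => by
    have := h.norm_eq_one
    rw [norm_pow] at this
    exact (pow_lt_one₀ (norm_nonneg w) h1 two_ne_zero).ne this
  intro n
  have hterm : ∀ j ∈ range (n + 1),
      w ^ (-(2 * (j : ℤ) ^ 2 + 2 * j)) * (aFun w j + aFun (-w) j) /
          (qPoch (w ^ 2) (w ^ 2) (n - j) * qPoch ((w ^ 2) ^ 2) (w ^ 2) (n + j)) =
        2 * ∑ k ∈ Icc (-(j : ℤ)) j, (-1) ^ j * (w ^ 2) ^ alphaExp k.natAbs (j - k.natAbs) /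
          (qPoch (w ^ 2) (w ^ 2) (n - j) * qPoch (w ^ 2) (w ^ 2) (n + j + 1)) := by
    intro j _
    have h1q : 1 - w ^ 2 ≠ 0 := by simpa using one_sub_pow_ne_zero hq one_ne_zero
    rw [alpha_eq_sum_alphaExp hw, ← one_sub_mul_qPoch_sq, mul_sum, mul_sum, sum_div]
    refine sum_congr rfl fun k _ => ?_
    field_simp
  rw [sum_congr rfl hterm, ← mul_sum, sum_alphaExp_div_qPoch hq, show (w ^ 2) ^ 2 = w ^ 4 by ring,
    show (w ^ 2) ^ (2 * n + 1) = w ^ (4 * n + 2) by ring, mul_div_assoc]
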